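/- arXiv:2506.04092 — 2 statements merged into one kernel-verified Lean document; each statement's English description precedes it below -/
import Mathlib

section
/- For every real ε > 0 and every individually rational mechanism ℳ there exists a near-perfect IKEP instance I (one whose compatibility graph admits a Γ-cycle packing covering all vertices except exactly one) whose compatibility graph contains at least one international Γ-cycle such that opt(I) > (1 − ε) · c_int(I) · SW(ℳ(I)); that is, the lower bound of c_int on the approximation ratio of individually rational mechanisms holds even when restricted to near-perfect instances. -/
open scoped Classical

/-- An `n`-partitioned compatibility graph: a finite directed graph on a finite
set of natural-number vertices, without self-loops, whose vertex set is
partitioned into `n` nonempty countries. -/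
structure PartGraph (n : ℕ) where
  verts : Finset ℕ
  arcs : Finset (ℕ × ℕ)
  arcs_mem : ∀ p ∈ arcs, p.1 ∈ verts ∧ p.2 ∈ verts
  no_loops : ∀ v, (v, v) ∉ arcs
  country : ℕ → Fin n
  country_nonempty : ∀ i : Fin n, ∃ v ∈ verts, country v = i

/-- Cyclic access to the entries of a list. -/
def cyc (l : List ℕ) (k : ℕ) : ℕ := l.getD (k % l.length) 0

/-- `l` is a (directed) cycle of `G`: a cyclic sequence of at least two distinct
vertices, consecutive ones (cyclically) joined by arcs. -/
def IsCycle {n : ℕ} (G : PartGraph n) (l : List ℕ) : Prop :=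
  2 ≤ l.length ∧ l.Nodup ∧ (∀ v ∈ l, v ∈ G.verts) ∧
    ∀ k < l.length, (cyc l k, cyc l (k + 1)) ∈ G.arcs

/-- All vertices of `l` belong to country `i`. -/
def IsNationalTo {n : ℕ} (G : PartGraph n) (l : List ℕ) (i : Fin n) : Prop :=
  ∀ v ∈ l, G.country v = i

/-- A national cycle: all vertices in one country. -/
def IsNational {n : ℕ} (G : PartGraph n) (l : List ℕ) : Prop :=
  ∃ i, IsNationalTo G l i

/-- An international cycle: not national (equivalently, for cycles, it contains
an international arc). -/
def IsInternational {n : ℕ} (G : PartGraph n) (l : List ℕ) : Prop :=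
  ¬ IsNational G l

/-- Position `k` (taken cyclically) is the start of a `V_i`-segment of `l`:
the vertex there is in country `i` but the cyclically preceding one is not. -/
def segStart {n : ℕ} (G : PartGraph n) (l : List ℕ) (i : Fin n) (k : ℕ) : Prop :=
  G.country (cyc l k) = i ∧ G.country (cyc l (k + l.length - 1)) ≠ i

/-- The size of the run of consecutive (cyclic) positions of `l`, starting at
position `k`, whose vertices are in country `i`.  At a segment start this is
exactly the size of that `V_i`-segment. -/
noncomputable def runLen {n : ℕ} (G : PartGraph n) (l : List ℕ) (i : Fin n) (k : ℕ) : ℕ :=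
  ((Finset.range l.length).filter
    fun j => ∀ j' ≤ j, G.country (cyc l (k + j')) = i).card

/-- The number of `V_i`-segments of the cycle `l`. -/
noncomputable def numSegs {n : ℕ} (G : PartGraph n) (l : List ℕ) (i : Fin n) : ℕ :=
  ((Finset.range l.length).filter fun k => segStart G l i k).card

/-- A set `Γ` of country-specific parameters for `n` countries. -/
structure Params (n : ℕ) where
  icl : ℕ∞
  ncl : Fin n → ℕ∞
  iss : Fin n → ℕ∞
  isn : Fin n → ℕ∞
  icl_ne_one : icl ≠ 1
  ncl_ne_one : ∀ i, ncl i ≠ 1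
  iss_pos : ∀ i, 1 ≤ iss i
  isn_pos : ∀ i, 1 ≤ isn i

/-- `l` is a `Γ`-cycle of `(G, 𝒱)`. -/
def IsGammaCycle {n : ℕ} (G : PartGraph n) (Γ : Params n) (l : List ℕ) : Prop :=
  IsCycle G l ∧
    ((∃ i, IsNationalTo G l i ∧ (l.length : ℕ∞) ≤ Γ.ncl i) ∨
      (IsInternational G l ∧ (l.length : ℕ∞) ≤ Γ.icl ∧
        (∀ i, ∀ k < l.length, segStart G l i k → (runLen G l i k : ℕ∞) ≤ Γ.iss i) ∧
        (∀ i, (numSegs G l i : ℕ∞) ≤ Γ.isn i)))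

/-- A cycle packing of `G`: a set of pairwise vertex-disjoint cycles. -/
def IsPacking {n : ℕ} (G : PartGraph n) (P : Finset (List ℕ)) : Prop :=
  (∀ l ∈ P, IsCycle G l) ∧
    ∀ l ∈ P, ∀ l' ∈ P, l ≠ l' → ∀ v ∈ l, v ∉ l'

/-- The size of a cycle packing: total number of arcs (= vertices) of its cycles. -/
def packSize (P : Finset (List ℕ)) : ℕ := ∑ l ∈ P, l.length

/-- A `Γ`-cycle packing of `(G, 𝒱)`. -/
def IsGammaPackingG {n : ℕ} (G : PartGraph n) (Γ : Params n) (P : Finset (List ℕ)) : Prop :=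
  IsPacking G P ∧ ∀ l ∈ P, IsGammaCycle G Γ l


/-- An IKEP instance `I = ⟨G, 𝒱, Γ⟩`. -/
structure IKEP where
  n : ℕ
  npos : 1 ≤ n
  G : PartGraph n
  prm : Params n

/-- A `Γ`-cycle packing of the instance `I`. -/
def IsGammaPacking (I : IKEP) (P : Finset (List ℕ)) : Prop :=
  IsGammaPackingG I.G I.prm P

/-- The utility `u_i(C)` of country `i` from the cycle `C`: the number of arcs
of `C` entering country `i`, i.e. the number of vertices of `C` in country `i`. -/
noncomputable def cycUtil {n : ℕ} (G : PartGraph n) (i : Fin n) (l : List ℕ) : ℕ :=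
  (l.filter fun v => G.country v = i).length

/-- The utility `u_i(𝒞)` of country `i` from a cycle packing. -/
noncomputable def packUtil {n : ℕ} (G : PartGraph n) (i : Fin n) (P : Finset (List ℕ)) : ℕ :=
  ∑ l ∈ P, cycUtil G i l

/-- `opt(I)`: the maximum size of a `Γ`-cycle packing of `G`. -/
noncomputable def optSize (I : IKEP) : ℕ :=
  sSup {m | ∃ P, IsGammaPacking I P ∧ packSize P = m}

/-- `nat_i(I)`: the maximum size of a `Γ`-cycle packing of the subgraph
`G[V_i]` induced by country `i` (all its cycles are national, so the only
constraint from `Γ` is the national cycle limit `ncl i`). -/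
noncomputable def natSize (I : IKEP) (i : Fin I.n) : ℕ :=
  sSup {m | ∃ P, IsPacking I.G P ∧ (∀ l ∈ P, IsNationalTo I.G l i) ∧
    (∀ l ∈ P, (l.length : ℕ∞) ≤ I.prm.ncl i) ∧ packSize P = m}

/-- A (randomised) mechanism: for every IKEP instance it returns one `Γ`-cycle
packing according to a (finitely supported) probability distribution on the
set `𝒟_I` of all `Γ`-cycle packings of `G`. -/
structure Mechanism where
  dist : IKEP → (Finset (List ℕ) →₀ ℝ)
  nonneg : ∀ I P, 0 ≤ dist I P
  sum_one : ∀ I, ((dist I).sum fun _ p => p) = 1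
  supp : ∀ I P, dist I P ≠ 0 → IsGammaPacking I P

/-- The expected utility `U_i(ℳ(I))` of country `i`. -/
noncomputable def expUtil (M : Mechanism) (I : IKEP) (i : Fin I.n) : ℝ :=
  (M.dist I).sum fun P p => p * (packUtil I.G i P : ℝ)

/-- The expected social welfare `SW(ℳ(I)) = Σ_i U_i(ℳ(I))`: the expected size
of the returned packing. -/
noncomputable def sw (M : Mechanism) (I : IKEP) : ℝ :=
  (M.dist I).sum fun P p => p * (packSize P : ℝ)

/-- Individual rationality. -/
def IndRational (M : Mechanism) : Prop :=
  ∀ I : IKEP, ∀ i : Fin I.n, (natSize I i : ℝ) ≤ expUtil M I i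

/-- Efficiency. -/
def Efficient (M : Mechanism) : Prop :=
  ∀ I : IKEP, sw M I = (optSize I : ℝ)

/-- `Γ' ≤ᵢ Γ`: country `i` misreports by declaring (weakly) smaller
international segment size and segment number; all other parameters agree. -/
def ParamLE {n : ℕ} (i : Fin n) (Γ' Γ : Params n) : Prop :=
  Γ'.icl = Γ.icl ∧ Γ'.ncl = Γ.ncl ∧
    Γ'.iss i ≤ Γ.iss i ∧ Γ'.isn i ≤ Γ.isn i ∧
    (∀ h, h ≠ i → Γ'.iss h = Γ.iss h) ∧ (∀ h, h ≠ i → Γ'.isn h = Γ.isn h)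

/-- Incentive compatibility (with respect to segment size and segment number). -/
def IncentiveCompatible (M : Mechanism) : Prop :=
  ∀ I : IKEP, ∀ i : Fin I.n, ∀ Γ' : Params I.n, ParamLE i Γ' I.prm →
    expUtil M { I with prm := Γ' } i ≤ expUtil M I i

/-- An international `Γ`-cycle of the instance `I`. -/
def IsIntlGammaCycle (I : IKEP) (l : List ℕ) : Prop :=
  IsGammaCycle I.G I.prm l ∧ IsInternational I.G l

/-- `c_int(I)`: the maximum length of an international `Γ`-cycle of `G`. -/
noncomputable def cInt (I : IKEP) : ℕ :=
  sSup {s | ∃ l, IsIntlGammaCycle I l ∧ l.length = s}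


/-- The set of vertices of `G` covered by none of the cycles of `P`. -/
noncomputable def uncovered (I : IKEP) (P : Finset (List ℕ)) : Finset ℕ :=
  I.G.verts.filter fun v => ∀ l ∈ P, v ∉ l

/-- A near-perfect instance: `G` admits a `Γ`-cycle packing leaving exactly one
vertex uncovered. -/
def NearPerfectInstance (I : IKEP) : Prop :=
  ∃ P, IsGammaPacking I P ∧ (uncovered I P).card = 1

/-!
Take `m ≥ 2`, a directed ring `0 → 1 → ⋯ → m-1 → 0` in country `0`, and vertices `m + i`
(`i < m - 1`) of country `1`, each forming a 2-cycle with `i`; international cycles may have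
length at most `2`, so `c_int = 2`. Country `0` alone packs its `m` vertices with the ring, so an
individually rational mechanism must give it expected utility `m`. A national cycle must be the
whole ring, which then meets every other cycle, so each packing is either the ring alone or
`k ≤ m - 1` two-cycles; in both cases `size + (m - 2) u₀ ≤ m (m - 1)`, and taking expectations
gives `SW ≤ m`. The `m - 1` two-cycles form a near-perfect packing, so `opt ≥ 2 (m - 1)`, and the
ratio `opt / SW ≥ 2 (m - 1) / m` tends to `c_int`.
-/

theorem cyc_mem {l : List ℕ} (hl : 0 < l.length) (k : ℕ) : cyc l k ∈ l := by
  rw [cyc, List.getD_eq_getElem _ _ (Nat.mod_lt _ hl)]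
  exact List.getElem_mem _

theorem IsCycle.arc_mem {n : ℕ} {G : PartGraph n} {l : List ℕ} (h : IsCycle G l) (k : ℕ) :
    (cyc l k, cyc l (k + 1)) ∈ G.arcs := by
  have hk : cyc l k = cyc l (k % l.length) := by simp only [cyc, Nat.mod_mod]
  have hk' : cyc l (k + 1) = cyc l (k % l.length + 1) := by simp only [cyc, Nat.mod_add_mod]
  rw [hk, hk']
  exact h.2.2.2 _ (Nat.mod_lt _ (by have := h.1; omega))

theorem IsPacking.sum_length_filter_le {n : ℕ} {G : PartGraph n} {P : Finset (List ℕ)}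
    (hP : IsPacking G P) (p : ℕ → Bool) :
    ∑ l ∈ P, (l.filter p).length ≤ (G.verts.filter (p ·)).card := by
  have hdisj : (P : Set (List ℕ)).PairwiseDisjoint fun l => (l.filter p).toFinset := by
    intro l hl l' hl' hne
    simp only [Function.onFun, Finset.disjoint_left, List.mem_toFinset, List.mem_filter]
    exact fun v hv hv' => hP.2 l hl l' hl' hne v hv.1 hv'.1
  calc ∑ l ∈ P, (l.filter p).length = (P.biUnion fun l => (l.filter p).toFinset).card := by
        rw [Finset.card_biUnion hdisj]
        exact Finset.sum_congr rfl fun l hl =>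
          (List.toFinset_card_of_nodup ((hP.1 l hl).2.1.filter p)).symm
    _ ≤ _ := Finset.card_le_card fun v hv => by
        simp only [Finset.mem_biUnion, List.mem_toFinset, List.mem_filter] at hv
        obtain ⟨l, hl, hvl, hpv⟩ := hv
        exact Finset.mem_filter.mpr ⟨(hP.1 l hl).2.2.1 v hvl, hpv⟩

theorem IsPacking.packSize_le_card {n : ℕ} {G : PartGraph n} {P : Finset (List ℕ)}
    (hP : IsPacking G P) : packSize P ≤ G.verts.card := by
  simpa [packSize] using hP.sum_length_filter_le fun _ => true

theorem IsPacking.packUtil_le_card {n : ℕ} {G : PartGraph n} {P : Finset (List ℕ)}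
    (hP : IsPacking G P) (i : Fin n) :
    packUtil G i P ≤ (G.verts.filter fun v => G.country v = i).card := by
  simpa [packUtil, cycUtil] using hP.sum_length_filter_le fun v => G.country v = i

theorem isPacking_singleton {n : ℕ} {G : PartGraph n} {l : List ℕ} (h : IsCycle G l) :
    IsPacking G {l} :=
  ⟨by simpa using h, by simp⟩

theorem le_optSize {I : IKEP} {P : Finset (List ℕ)} (hP : IsGammaPacking I P) :
    packSize P ≤ optSize I :=
  le_csSup ⟨I.G.verts.card, by rintro _ ⟨Q, hQ, rfl⟩; exact hQ.1.packSize_le_card⟩ ⟨P, hP, rfl⟩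

theorem le_natSize {I : IKEP} {i : Fin I.n} {P : Finset (List ℕ)} (hP : IsPacking I.G P)
    (hnat : ∀ l ∈ P, IsNationalTo I.G l i) (hlen : ∀ l ∈ P, (l.length : ℕ∞) ≤ I.prm.ncl i) :
    packSize P ≤ natSize I i :=
  le_csSup ⟨I.G.verts.card, by rintro _ ⟨Q, hQ, -, -, rfl⟩; exact hQ.packSize_le_card⟩
    ⟨P, hP, hnat, hlen, rfl⟩

theorem cInt_le_of_icl_le {I : IKEP} {c : ℕ} (h : I.prm.icl ≤ c) : cInt I ≤ c := by
  refine csSup_le' ?_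
  rintro _ ⟨l, ⟨⟨-, ⟨i, hi, -⟩ | ⟨-, hlen, -⟩⟩, hint⟩, rfl⟩
  · exact absurd ⟨i, hi⟩ hint
  · exact_mod_cast hlen.trans h

theorem sw_nonneg (M : Mechanism) (I : IKEP) : 0 ≤ sw M I :=
  Finset.sum_nonneg fun P _ => mul_nonneg (M.nonneg I P) (Nat.cast_nonneg _)

theorem sw_add_mul_expUtil_le (M : Mechanism) (I : IKEP) (i : Fin I.n) {a b : ℝ}
    (h : ∀ P, IsGammaPacking I P → (packSize P : ℝ) + a * packUtil I.G i P ≤ b) :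
    sw M I + a * expUtil M I i ≤ b := by
  set D := M.dist I
  calc sw M I + a * expUtil M I i
      = ∑ P ∈ D.support, D P * ((packSize P : ℝ) + a * packUtil I.G i P) := by
        simp only [sw, expUtil, Finsupp.sum, Finset.mul_sum, ← Finset.sum_add_distrib]
        exact Finset.sum_congr rfl fun P _ => by ring
    _ ≤ ∑ P ∈ D.support, D P * b := Finset.sum_le_sum fun P hP =>
        mul_le_mul_of_nonneg_left (h P (M.supp I P (Finsupp.mem_support_iff.mp hP))) (M.nonneg I P)
    _ = b := by rw [← Finset.sum_mul, show ∑ P ∈ D.support, D P = 1 from M.sum_one I, one_mul]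

theorem cycUtil_eq_one_of_isInternational {G : PartGraph 2} {l : List ℕ}
    (hl : IsInternational G l) (hlen : l.length = 2) (i : Fin 2) : cycUtil G i l = 1 := by
  obtain ⟨a, b, rfl⟩ := List.length_eq_two.mp hlen
  have hab : G.country a ≠ G.country b := fun h =>
    hl ⟨G.country a, by simp [IsNationalTo, h]⟩
  simp only [cycUtil, List.filter_cons, List.filter_nil, decide_eq_true_eq]
  split_ifs with ha hb hb
  · exact absurd (ha.trans hb.symm) hab
  · rfl
  · rfl
  · omega

namespace RingPairs

def Arc (m u v : ℕ) : Prop :=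
  (u < m ∧ v = (u + 1) % m) ∨ (u < m - 1 ∧ v = m + u) ∨ (v < m - 1 ∧ u = m + v)

variable {m : ℕ}

noncomputable def graph (hm : 2 ≤ m) : PartGraph 2 where
  verts := Finset.range (2 * m - 1)
  arcs := (Finset.range (2 * m - 1) ×ˢ Finset.range (2 * m - 1)).filter fun p => Arc m p.1 p.2
  arcs_mem _ hp := Finset.mem_product.mp (Finset.mem_filter.mp hp).1
  no_loops v hv := by
    rcases (Finset.mem_filter.mp hv).2 with ⟨hvm, hvv⟩ | h | h
    · rcases Nat.lt_or_ge (v + 1) m with h | h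
      · rw [Nat.mod_eq_of_lt h] at hvv; omega
      · rw [show v + 1 = m by omega, Nat.mod_self] at hvv; omega
    all_goals omega
  country v := if v < m then 0 else 1
  country_nonempty i := by
    fin_cases i
    · exact ⟨0, by simp only [Finset.mem_range]; omega,
        by simp only [if_pos (by omega : 0 < m)]; rfl⟩
    · exact ⟨m, by simp only [Finset.mem_range]; omega, by simp⟩

variable {hm : 2 ≤ m}

theorem mem_arcs {u v : ℕ} : (u, v) ∈ (graph hm).arcs ↔ Arc m u v := by
  refine ⟨fun h => (Finset.mem_filter.mp h).2, fun h => Finset.mem_filter.mpr ⟨?_, h⟩⟩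
  have := Nat.mod_lt (u + 1) (by omega : 0 < m)
  simp only [Finset.mem_product, Finset.mem_range]
  rcases h with h | h | h <;> omega

theorem country_eq_zero {v : ℕ} : (graph hm).country v = 0 ↔ v < m := by
  simp [graph]

theorem country_eq_one {v : ℕ} : (graph hm).country v = 1 ↔ m ≤ v := by
  simp [graph]

theorem mem_verts {v : ℕ} : v ∈ (graph hm).verts ↔ v < 2 * m - 1 := Finset.mem_range

variable (hm) in
def params : Params 2 where
  icl := 2
  ncl := ![m, 0]
  iss _ := ⊤
  isn _ := ⊤
  icl_ne_one := by decide
  ncl_ne_one i := by fin_cases i <;> simp; omega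
  iss_pos _ := le_top
  isn_pos _ := le_top

variable (hm) in
noncomputable def ikep : IKEP := ⟨2, by norm_num, graph hm, params hm⟩

theorem isCycle_range : IsCycle (graph hm) (List.range m) := by
  have hcyc : ∀ k, cyc (List.range m) k = k % m := fun k => by
    simp [cyc, List.getElem?_range (Nat.mod_lt k (by omega : 0 < m))]
  refine ⟨by simpa using hm, List.nodup_range, fun v hv => ?_, fun k _ => ?_⟩
  · rw [List.mem_range] at hv
    rw [mem_verts]; omega
  · rw [hcyc, hcyc, mem_arcs]
    exact Or.inl ⟨Nat.mod_lt _ (by omega), (Nat.mod_add_mod k m 1).symm⟩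

theorem mem_of_isCycle_of_forall_lt {l : List ℕ} (h : IsCycle (graph hm) l)
    (hl : ∀ v ∈ l, v < m) {j : ℕ} (hj : j < m) : j ∈ l := by
  have hl0 : 0 < l.length := by have := h.1; omega
  have hsucc : ∀ k, cyc l (k + 1) = (cyc l k + 1) % m := fun k => by
    have := hl _ (cyc_mem hl0 k)
    have := hl _ (cyc_mem hl0 (k + 1))
    rcases mem_arcs.mp (h.arc_mem k) with ⟨-, h⟩ | h | h
    · exact h
    all_goals omega
  have hiter : ∀ k, cyc l k = (cyc l 0 + k) % m := fun k => by
    induction k with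
    | zero => exact (Nat.mod_eq_of_lt (hl _ (cyc_mem hl0 0))).symm
    | succ k ih => rw [hsucc, ih, Nat.mod_add_mod, add_assoc]
  have h0 := hl _ (cyc_mem hl0 0)
  have := cyc_mem hl0 (j + m - cyc l 0)
  rwa [hiter, show cyc l 0 + (j + m - cyc l 0) = j + m by omega, Nat.add_mod_right,
    Nat.mod_eq_of_lt hj] at this

theorem le_natSize_zero : m ≤ natSize (ikep hm) (0 : Fin 2) := by
  have h := le_natSize (I := ikep hm) (i := (0 : Fin 2))
    (isPacking_singleton (isCycle_range (hm := hm)))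
    (fun l hl v hv => by simp_all [ikep, country_eq_zero]) (by simp [ikep, params])
  simpa [packSize] using h

theorem isIntlGammaCycle_pair {i : ℕ} (hi : i < m - 1) :
    IsIntlGammaCycle (ikep hm) [i, m + i] := by
  have hintl : IsInternational (graph hm) [i, m + i] := by
    rintro ⟨c, hc⟩
    have h0 := hc i (by simp)
    have h1 := hc (m + i) (by simp)
    rw [country_eq_zero.mpr (by omega)] at h0
    rw [country_eq_one.mpr (by omega), ← h0] at h1
    exact absurd h1 (by decide)
  have hcyc : IsCycle (graph hm) [i, m + i] := by
    refine ⟨by simp, by simp; omega, fun v hv => ?_, fun k hk => ?_⟩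
    · simp only [List.mem_cons, List.not_mem_nil, or_false] at hv
      rw [mem_verts]; omega
    · simp only [List.length_cons, List.length_nil] at hk
      interval_cases k <;> simp [cyc, mem_arcs, Arc] <;> omega
  exact ⟨⟨hcyc, Or.inr ⟨hintl, by simp [ikep, params], fun _ _ _ _ => le_top,
    fun _ => le_top⟩⟩, hintl⟩

def pairPacking (m : ℕ) : Finset (List ℕ) :=
  (Finset.range (m - 1)).image fun i => [i, m + i]

theorem mem_pairPacking {l : List ℕ} : l ∈ pairPacking m ↔ ∃ i < m - 1, l = [i, m + i] := by
  simp [pairPacking, eq_comm]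

theorem isGammaPacking_pairPacking : IsGammaPacking (ikep hm) (pairPacking m) := by
  refine ⟨⟨fun l hl => ?_, fun l hl l' hl' hne v hv hv' => ?_⟩, fun l hl => ?_⟩
  · obtain ⟨i, hi, rfl⟩ := mem_pairPacking.mp hl
    exact (isIntlGammaCycle_pair hi).1.1
  · obtain ⟨i, hi, rfl⟩ := mem_pairPacking.mp hl
    obtain ⟨i', hi', rfl⟩ := mem_pairPacking.mp hl'
    simp only [List.mem_cons, List.not_mem_nil, or_false] at hv hv'
    have : i ≠ i' := by rintro rfl; exact hne rfl
    omega
  · obtain ⟨i, hi, rfl⟩ := mem_pairPacking.mp hl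
    exact (isIntlGammaCycle_pair hi).1

theorem packSize_pairPacking : packSize (pairPacking m) = 2 * (m - 1) := by
  rw [packSize, pairPacking, Finset.sum_image (by simp)]
  simp [mul_comm]

theorem uncovered_pairPacking : uncovered (ikep hm) (pairPacking m) = {m - 1} := by
  ext v
  simp only [uncovered, Finset.mem_filter, Finset.mem_singleton, mem_pairPacking]
  constructor
  · rintro ⟨hv, hnot⟩
    rw [ikep, mem_verts] at hv
    by_contra hne
    rcases Nat.lt_or_ge v m with h | h
    · exact hnot _ ⟨v, by omega, rfl⟩ (by simp)
    · exact hnot _ ⟨v - m, by omega, rfl⟩ (by simp; omega)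
  · rintro rfl
    refine ⟨(mem_verts (hm := hm)).mpr (by omega), ?_⟩
    rintro _ ⟨i, hi, rfl⟩
    simp only [List.mem_cons, List.not_mem_nil, or_false]
    omega

theorem card_filter_country_one :
    ((graph hm).verts.filter fun v => (graph hm).country v = 1).card = m - 1 := by
  have : ((graph hm).verts.filter fun v => (graph hm).country v = 1) =
      Finset.Ico m (2 * m - 1) := by
    ext v
    simp only [Finset.mem_filter, mem_verts, country_eq_one, Finset.mem_Ico]
    omega
  rw [this, Nat.card_Ico]
  omega

theorem length_eq_two_of_isInternational {l : List ℕ}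
    (h : IsGammaCycle (graph hm) (params hm) l) (hl : IsInternational (graph hm) l) :
    l.length = 2 := by
  obtain ⟨hcyc, ⟨i, hnat, -⟩ | ⟨-, hlen, -, -⟩⟩ := h
  · exact absurd ⟨i, hnat⟩ hl
  · have := hcyc.1
    simp only [params] at hlen
    exact_mod_cast le_antisymm hlen (by exact_mod_cast this)

theorem forall_lt_of_not_isInternational {l : List ℕ}
    (h : IsGammaCycle (graph hm) (params hm) l) (hl : ¬IsInternational (graph hm) l) :
    (∀ v ∈ l, v < m) ∧ l.length ≤ m := by
  obtain ⟨hcyc, ⟨i, hnat, hlen⟩ | ⟨hintl, -⟩⟩ := h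
  · fin_cases i
    · exact ⟨fun v hv => country_eq_zero.mp (hnat v hv), by simpa [params] using hlen⟩
    · have := hcyc.1
      simp [params] at hlen
      simp [hlen] at this
  · exact absurd hintl hl

theorem exists_mem_lt_of_isGammaCycle {l : List ℕ}
    (h : IsGammaCycle (graph hm) (params hm) l) : ∃ v ∈ l, v < m := by
  by_cases hl : IsInternational (graph hm) l
  · have hutil := cycUtil_eq_one_of_isInternational hl (length_eq_two_of_isInternational h hl) 0
    obtain ⟨v, hv⟩ := List.length_pos_iff_exists_mem.mp (hutil ▸ Nat.one_pos)
    simp only [List.mem_filter, decide_eq_true_eq, country_eq_zero] at hv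
    exact ⟨v, hv⟩
  · have hlt := (forall_lt_of_not_isInternational h hl).1
    exact ⟨0, mem_of_isCycle_of_forall_lt h.1 hlt (by omega), by omega⟩

theorem packSize_add_mul_packUtil_le {P : Finset (List ℕ)} (hP : IsGammaPacking (ikep hm) P) :
    (packSize P : ℝ) + (m - 2) * packUtil (graph hm) 0 P ≤ m * (m - 1) := by
  have hpack : IsPacking (graph hm) P := hP.1
  have hgam : ∀ l ∈ P, IsGammaCycle (graph hm) (params hm) l := hP.2
  have hm' : (2 : ℝ) ≤ m := by exact_mod_cast hm
  by_cases hnat : ∃ l ∈ P, ¬IsInternational (graph hm) l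
  · obtain ⟨l, hl, hnl⟩ := hnat
    obtain ⟨hlt, hlen⟩ := forall_lt_of_not_isInternational (hgam l hl) hnl
    have hsingle : P = {l} := Finset.eq_singleton_iff_unique_mem.mpr ⟨hl, fun l' hl' => by
      by_contra hne
      obtain ⟨v, hv, hvm⟩ := exists_mem_lt_of_isGammaCycle (hgam l' hl')
      exact hpack.2 l' hl' l hl hne v hv (mem_of_isCycle_of_forall_lt (hpack.1 l hl) hlt hvm)⟩
    have hutil : cycUtil (graph hm) 0 l = l.length := by
      rw [cycUtil, List.filter_eq_self.mpr]
      simpa [country_eq_zero] using hlt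
    have hlen' : (l.length : ℝ) ≤ m := by exact_mod_cast hlen
    simp only [hsingle, packSize, packUtil, Finset.sum_singleton, hutil]
    nlinarith
  · push Not at hnat
    have hlen : ∀ l ∈ P, l.length = 2 := fun l hl =>
      length_eq_two_of_isInternational (hgam l hl) (hnat l hl)
    have hsize : packSize P = 2 * P.card := by
      rw [packSize, Finset.sum_congr rfl hlen, Finset.sum_const, smul_eq_mul, mul_comm]
    have hutil (i : Fin 2) : packUtil (graph hm) i P = P.card := by
      rw [packUtil, Finset.sum_congr rfl fun l hl =>
        cycUtil_eq_one_of_isInternational (hnat l hl) (hlen l hl) i]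
      simp
    have hcard : (P.card : ℝ) ≤ m - 1 := by
      have h := (hutil 1 ▸ hpack.packUtil_le_card 1).trans card_filter_country_one.le
      rw [← Nat.cast_le (α := ℝ), Nat.cast_sub (by omega), Nat.cast_one] at h
      exact h
    rw [hsize, hutil 0]
    push_cast
    nlinarith

theorem sw_le (M : Mechanism) (hIR : IndRational M) : sw M (ikep hm) ≤ m := by
  have hbound := sw_add_mul_expUtil_le M (ikep hm) (0 : Fin 2)
    (a := m - 2) (b := m * (m - 1)) fun P hP => packSize_add_mul_packUtil_le hP
  have hnat : (m : ℝ) ≤ expUtil M (ikep hm) (0 : Fin 2) :=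
    (Nat.cast_le.mpr le_natSize_zero).trans (hIR _ _)
  have hm' : (2 : ℝ) ≤ m := by exact_mod_cast hm
  nlinarith

theorem le_optSize_ikep : 2 * (m - 1) ≤ optSize (ikep hm) :=
  packSize_pairPacking (m := m) ▸ le_optSize isGammaPacking_pairPacking

theorem nearPerfectInstance_ikep : NearPerfectInstance (ikep hm) :=
  ⟨pairPacking m, isGammaPacking_pairPacking, by rw [uncovered_pairPacking]; rfl⟩

theorem cInt_ikep_le : cInt (ikep hm) ≤ 2 :=
  cInt_le_of_icl_le (c := 2) le_rfl

end RingPairs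

/-- The lower bound of `c_int` on the approximation ratio of
individually rational mechanisms holds even restricted to near-perfect
instances: for every `ε > 0` and every IR mechanism `ℳ` there is a
near-perfect instance with an international `Γ`-cycle on which
`opt(I) > (1 - ε)·c_int(I)·SW(ℳ(I))`. -/
theorem IR_lower_bound_cInt_nearPerfect (ε : ℝ) (hε : 0 < ε) (M : Mechanism)
    (hIR : IndRational M) :
    ∃ I : IKEP, NearPerfectInstance I ∧ (∃ l, IsIntlGammaCycle I l) ∧
      (1 - ε) * (cInt I : ℝ) * sw M I < (optSize I : ℝ) := by
  obtain ⟨m, hm⟩ := exists_nat_gt (1 / ε + 1)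
  have hεm : 1 < ε * (m - 1) := by
    rw [← div_lt_iff₀' hε]
    linarith
  have hm2 : 2 ≤ m := by
    exact_mod_cast (show (1 : ℝ) < m by linarith [one_div_pos.mpr hε])
  set I := RingPairs.ikep hm2
  refine ⟨I, RingPairs.nearPerfectInstance_ikep,
    ⟨_, RingPairs.isIntlGammaCycle_pair (i := 0) (by omega)⟩, ?_⟩
  have hc : (cInt I : ℝ) ≤ 2 := by exact_mod_cast RingPairs.cInt_ikep_le
  have hopt : ((2 * (m - 1) : ℕ) : ℝ) ≤ optSize I := Nat.cast_le.mpr RingPairs.le_optSize_ikep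
  push_cast [Nat.cast_sub (by omega : 1 ≤ m)] at hopt
  have hX : (cInt I : ℝ) * sw M I ≤ 2 * m :=
    mul_le_mul hc (RingPairs.sw_le M hIR) (sw_nonneg M I) zero_le_two
  have hX0 : 0 ≤ (cInt I : ℝ) * sw M I := mul_nonneg (Nat.cast_nonneg _) (sw_nonneg M I)
  rw [mul_assoc]
  rcases le_or_gt ε 1 with hε1 | hε1
  · nlinarith [mul_le_mul_of_nonneg_left hX (sub_nonneg.mpr hε1)]
  · nlinarith [mul_nonneg (sub_nonneg.mpr hε1.le) hX0]
end

section
/- For every pre-selection function σ, ℳ_order is a mechanism — on every IKEP instance I = ⟨G,V,Γ⟩ it returns, with probability 1, a Γ-cycle packing of G — and it satisfies both individual rationality (U_i(ℳ_order(I)) ≥ nat_i(I) for every instance I and every country i) and incentive compatibility (U_i(ℳ_order(⟨G,V,Γ⟩)) ≥ U_i(ℳ_order(⟨G,V,Γ'⟩)) for every instance ⟨G,V,Γ⟩, every country i, and every Γ' ≤_i Γ). -/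
open scoped Classical

/-! ### The mechanism `ℳ_order` -/

/-- Nodup lists with entries in a fixed finite set form a finite set. -/
lemma finite_nodup_lists (s : Finset ℕ) :
    {l : List ℕ | l.Nodup ∧ ∀ x ∈ l, x ∈ s}.Finite := by
  classical
  have h : {l : List ℕ | l.Nodup ∧ ∀ x ∈ l, x ∈ s} ⊆
      Set.range fun l : {l : List {x : ℕ // x ∈ s} // l.Nodup} =>
        l.1.map Subtype.val := by
    rintro l ⟨hnd, hmem⟩
    refine ⟨⟨l.attach.map fun x => ⟨x.1, hmem x.1 x.2⟩, ?_⟩, ?_⟩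
    · refine (List.nodup_attach.mpr hnd).map ?_
      intro x y hxy
      have h2 := congrArg Subtype.val hxy
      exact Subtype.ext h2
    · simp [List.map_map, Function.comp]
  exact (Set.finite_range _).subset h

/-- The canonical list representation of a cycle: the one (among its
rotations) starting at its smallest vertex.  Working with canonical
representatives identifies lists up to rotation, i.e. identifies the abstract
cycles. -/
def IsCanon (l : List ℕ) : Prop := ∀ v ∈ l, l.headI ≤ v

/-- Membership in `𝒳(Ĝ)`: `l` is (the canonical representation of) an
international cycle of `G` of length at most `icl` all of whose vertices
belong to `avail` (the vertices of `Ĝ`). -/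
def XCond {n : ℕ} (G : PartGraph n) (icl : ℕ∞) (avail : Finset ℕ) (l : List ℕ) : Prop :=
  IsCycle G l ∧ (∀ v ∈ l, v ∈ avail) ∧ IsInternational G l ∧
    (l.length : ℕ∞) ≤ icl ∧ IsCanon l

lemma XCond_finite {n : ℕ} (G : PartGraph n) (icl : ℕ∞) (avail : Finset ℕ) :
    {l | XCond G icl avail l}.Finite :=
  (finite_nodup_lists avail).subset fun _ hl => ⟨hl.1.2.1, hl.2.1⟩

/-- The set `𝒳(Ĝ)`, listed in some fixed order. -/
noncomputable def XList {n : ℕ} (G : PartGraph n) (icl : ℕ∞) (avail : Finset ℕ) :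
    List (List ℕ) :=
  (XCond_finite G icl avail).toFinset.toList

/-- `l` is (the canonical representation of) a substitute for the cycle `C`:
an international `Γ`-cycle of `G` whose vertex set is contained in that of `C`
and which has at most one `V_i`-segment for every country `i`. -/
def SubCond {n : ℕ} (G : PartGraph n) (Γ : Params n) (C l : List ℕ) : Prop :=
  IsGammaCycle G Γ l ∧ IsInternational G l ∧ (∀ v ∈ l, v ∈ C) ∧
    (∀ i, numSegs G l i ≤ 1) ∧ IsCanon l

lemma SubCond_finite {n : ℕ} (G : PartGraph n) (Γ : Params n) (C : List ℕ) :
    {l | SubCond G Γ C l}.Finite :=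
  (finite_nodup_lists C.toFinset).subset fun _ hl =>
    ⟨hl.1.1.2.1, fun x hx => List.mem_toFinset.mpr (hl.2.2.1 x hx)⟩

/-- The substitutes for `C`, listed in some fixed order. -/
noncomputable def subList {n : ℕ} (G : PartGraph n) (Γ : Params n) (C : List ℕ) :
    List (List ℕ) :=
  (SubCond_finite G Γ C).toFinset.toList

/-- `c` is vertex-disjoint from all cycles in `acc`. -/
def DisjFrom (acc : List (List ℕ)) (c : List ℕ) : Prop :=
  ∀ a ∈ acc, ∀ v ∈ c, v ∉ a

/-- Step 4 of `ℳ_order`: scan the ordering and greedily collect pairwise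
vertex-disjoint cycles. -/
noncomputable def greedy : List (List ℕ) → List (List ℕ) → List (List ℕ)
  | acc, [] => acc
  | acc, c :: rest => if DisjFrom acc c then greedy (c :: acc) rest else greedy acc rest

/-- Step 5 of `ℳ_order`, in expectation: process the greedily selected cycles
one by one (keeping `Γ`-cycles, replacing turnable non-`Γ`-cycles by a
uniformly random substitute, deleting the rest), finally accumulating them
into `acc` (initialised with `𝒞_nat`), and return the expected value of `f`
of the resulting packing. -/
noncomputable def stepExp {n : ℕ} (G : PartGraph n) (Γ : Params n)
    (f : Finset (List ℕ) → ℝ) : List (List ℕ) → Finset (List ℕ) → ℝ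
  | [], acc => f acc
  | C :: rest, acc =>
    if IsGammaCycle G Γ C then stepExp G Γ f rest (insert C acc)
    else if subList G Γ C ≠ [] then
      (((subList G Γ C).map fun D => stepExp G Γ f rest (insert D acc)).sum) /
        ((subList G Γ C).length : ℝ)
    else stepExp G Γ f rest acc

/-- The expected value of `f` of the packing returned by `ℳ_order` on input
`I`, given that Step 1 pre-selected the national packing `Cnat`: the ordering
of `𝒳(Ĝ)` in Step 3 is uniformly random, and the substitutes in Step 5 are
chosen independently and uniformly at random. -/
noncomputable def MorderExpFrom (I : IKEP) (Cnat : Finset (List ℕ))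
    (f : Finset (List ℕ) → ℝ) : ℝ :=
  let avail := I.G.verts \ Cnat.biUnion List.toFinset
  let XL := XList I.G I.prm.icl avail
  ((XL.permutations.map fun ord => stepExp I.G I.prm f (greedy [] ord) Cnat).sum) /
    (XL.permutations.length : ℝ)

/-- A national `Γ`-cycle packing (only the national cycle limits `ncl` are
relevant). -/
def IsNatPacking {n : ℕ} (G : PartGraph n) (ncl : Fin n → ℕ∞)
    (P : Finset (List ℕ)) : Prop :=
  IsPacking G P ∧ ∀ l ∈ P, ∃ i, IsNationalTo G l i ∧ (l.length : ℕ∞) ≤ ncl i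

/-- A maximum national `Γ`-cycle packing. -/
def IsMaxNatPacking {n : ℕ} (G : PartGraph n) (ncl : Fin n → ℕ∞)
    (P : Finset (List ℕ)) : Prop :=
  IsNatPacking G ncl P ∧ ∀ Q, IsNatPacking G ncl Q → packSize Q ≤ packSize P

/-- A pre-selection function `σ`: it assigns to every partitioned graph and
every national cycle-limit vector a maximum national `Γ`-cycle packing
(depending only on these data). -/
structure PreSelection where
  sel : (n : ℕ) → PartGraph n → (Fin n → ℕ∞) → Finset (List ℕ)
  isMax : ∀ (n : ℕ) (G : PartGraph n) (ncl : Fin n → ℕ∞),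
    IsMaxNatPacking G ncl (sel n G ncl)

/-- The expected value of `f` of the packing returned by `ℳ_order` (with
pre-selection function `σ`) on input `I`. -/
noncomputable def MorderExp (σ : PreSelection) (I : IKEP)
    (f : Finset (List ℕ) → ℝ) : ℝ :=
  MorderExpFrom I (σ.sel I.n I.G I.prm.ncl) f

/-- The expected utility `U_i(ℳ_order(I))` of country `i`. -/
noncomputable def MorderU (σ : PreSelection) (I : IKEP) (i : Fin I.n) : ℝ :=
  MorderExp σ I fun P => (packUtil I.G i P : ℝ)

/-- The expected social welfare `SW(ℳ_order(I))`: the expected size of the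
returned packing. -/
noncomputable def MorderSW (σ : PreSelection) (I : IKEP) : ℝ :=
  MorderExp σ I fun P => (packSize P : ℝ)

/-!
Every cycle kept or substituted in Step 5 is a `Γ`-cycle inside a selected cycle, hence
disjoint from everything else accepted, so the output is always a `Γ`-packing. Because the
greedily selected cycles are vertex-disjoint, country `i`'s expected utility splits as
`u_i(𝒞_nat)` plus, for each selected cycle, the expected utility of what Step 5 makes of it.

Individual rationality: exchanging the `V_i`-cycles of the maximum national packing `𝒞_nat`
for an optimal packing of `G[V_i]` keeps it national, so `u_i(𝒞_nat) ≥ nat_i`.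

Incentive compatibility: `𝒞_nat` and the greedy selection do not depend on `iss`, `isn`.
For a single selected cycle, a report `Γ' ≤_i Γ` can only turn keeping it into substituting
or deleting it (a substitute uses a subset of its vertices), or shrink its set of
substitutes; a substitute with one segment per country that `Γ'` drops has a `V_i`-segment
longer than `iss'_i`, so it is worth more to `i` than any substitute `Γ'` keeps, and
dropping it lowers the average.
-/

open Finset
open scoped BigOperators

lemma exists_rise_between {Q : ℕ → Prop} {a d : ℕ} (ha : ¬ Q a) (hd : Q (a + d)) :
    ∃ b, a ≤ b ∧ b < a + d ∧ ¬ Q b ∧ Q (b + 1) := by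
  induction d with
  | zero => exact absurd hd ha
  | succ d ih =>
    by_cases h : Q (a + d)
    · obtain ⟨b, hab, hbd, hb, hb1⟩ := ih h
      exact ⟨b, hab, by omega, hb, hb1⟩
    · exact ⟨a + d, by omega, by omega, h, hd⟩

lemma Nat.mod_ne_of_lt_of_lt_add {k L x : ℕ} (hkx : k < x) (hxL : x < k + L) :
    x % L ≠ k := by
  intro h
  have := Nat.div_add_mod x L
  rcases Nat.eq_zero_or_pos (x / L) with h0 | h0
  · rw [h0] at this; omega
  · have := Nat.le_mul_of_pos_right L h0; omega

section Segments

variable {n : ℕ} (G : PartGraph n) (i : Fin n) {l : List ℕ}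

lemma cyc_congr {k m : ℕ} (h : k ≡ m [MOD l.length]) : cyc l k = cyc l m := by
  unfold cyc; rw [h]

lemma cyc_mod (l : List ℕ) (k : ℕ) : cyc l (k % l.length) = cyc l k :=
  cyc_congr (Nat.mod_modEq k _)

lemma mem_iff_exists_cyc {v : ℕ} : v ∈ l ↔ ∃ k < l.length, cyc l k = v := by
  rw [List.mem_iff_getElem]
  refine exists_congr fun k => ⟨fun ⟨hk, hv⟩ => ⟨hk, ?_⟩, fun ⟨hk, hv⟩ => ⟨hk, ?_⟩⟩ <;>
    simp_all [cyc, Nat.mod_eq_of_lt hk]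

lemma cycUtil_eq_card (l : List ℕ) :
    cycUtil G i l = #{k ∈ range l.length | G.country (cyc l k) = i} := by
  have hgetD : ∀ l : List ℕ,
      cycUtil G i l = #{k ∈ range l.length | G.country (l.getD k 0) = i} := by
    intro l
    induction l with
    | nil => simp [cycUtil]
    | cons a t ih =>
      rw [card_filter, List.length_cons, sum_range_succ']
      simp only [List.getD_cons_succ, List.getD_cons_zero, ← card_filter]
      unfold cycUtil at *
      by_cases h : G.country a = i <;> simp [h, ih]
  rw [hgetD]
  refine congrArg card (filter_congr fun k hk => ?_)
  rw [cyc, Nat.mod_eq_of_lt (mem_range.1 hk)]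

lemma segStart_mod_of_rise (hl : 0 < l.length) {b : ℕ} (hb : G.country (cyc l b) ≠ i)
    (hb1 : G.country (cyc l (b + 1)) = i) : segStart G l i ((b + 1) % l.length) := by
  refine ⟨by rwa [cyc_mod], ?_⟩
  have h : (b + 1) % l.length + l.length - 1 ≡ b [MOD l.length] :=
    calc (b + 1) % l.length + l.length - 1 = (b + 1) % l.length + (l.length - 1) := by omega
      _ ≡ b + 1 + (l.length - 1) [MOD l.length] := (Nat.mod_modEq _ _).add_right _
      _ = b + l.length := by omega
      _ ≡ b [MOD l.length] := by simp [Nat.ModEq]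
  rwa [cyc_congr h]

lemma exists_segStart (hp : ∃ p < l.length, G.country (cyc l p) = i)
    (hq : ∃ q < l.length, G.country (cyc l q) ≠ i) : ∃ k < l.length, segStart G l i k := by
  obtain ⟨p, hpl, hp⟩ := hp
  obtain ⟨q, hql, hq⟩ := hq
  have hend : G.country (cyc l (q + (p + l.length - q))) = i := by
    rwa [cyc_congr (show q + (p + l.length - q) ≡ p [MOD l.length] by
      rw [show q + (p + l.length - q) = p + l.length by omega]; simp [Nat.ModEq])]
  obtain ⟨b, -, -, hb, hb1⟩ := exists_rise_between (Q := fun t => G.country (cyc l t) = i) hq hend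
  exact ⟨_, Nat.mod_lt _ (by omega), segStart_mod_of_rise G i (by omega) hb hb1⟩

lemma runLen_le_cycUtil (hl : 0 < l.length) (k : ℕ) : runLen G l i k ≤ cycUtil G i l := by
  rw [cycUtil_eq_card]
  refine card_le_card_of_injOn (fun j => (k + j) % l.length) (fun j hj => ?_)
    (fun j₁ hj₁ j₂ hj₂ h => ?_)
  · simp only [coe_filter, mem_range, Set.mem_ofPred_eq] at hj ⊢
    exact ⟨Nat.mod_lt _ hl, by rw [cyc_mod]; exact hj.2 j le_rfl⟩
  · simp only [coe_filter, mem_range, Set.mem_ofPred_eq] at hj₁ hj₂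
    have : j₁ ≡ j₂ [MOD l.length] := Nat.ModEq.add_left_cancel' k h
    rwa [Nat.ModEq, Nat.mod_eq_of_lt hj₁.1, Nat.mod_eq_of_lt hj₂.1] at this

/-- A vertex outside `V_i` between the segment start `k` and a later `V_i`-vertex would
force a second entry into `V_i`. -/
lemma country_eq_of_numSegs_le_one (hseg : numSegs G l i ≤ 1) {k : ℕ} (hk : k < l.length)
    (hks : segStart G l i k) {j : ℕ} (hj : j < l.length)
    (hji : G.country (cyc l (k + j)) = i) : ∀ j' ≤ j, G.country (cyc l (k + j')) = i := by
  intro j' hj'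
  by_contra hj'i
  obtain ⟨b, hb₁, hb₂, hb, hb1⟩ := exists_rise_between
    (Q := fun t => G.country (cyc l t) = i) hj'i (d := j - j')
    (by rwa [show k + j' + (j - j') = k + j by omega])
  have hne : (b + 1) % l.length ≠ k := Nat.mod_ne_of_lt_of_lt_add (by omega) (by omega)
  have : 1 < numSegs G l i := one_lt_card.2
    ⟨k, mem_filter.2 ⟨mem_range.2 hk, hks⟩, _, mem_filter.2 ⟨mem_range.2 (Nat.mod_lt _
      (by omega)), segStart_mod_of_rise G i (by omega) hb hb1⟩, hne.symm⟩
  omega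

lemma cycUtil_le_runLen (hseg : numSegs G l i ≤ 1) {k : ℕ} (hk : k < l.length)
    (hks : segStart G l i k) : cycUtil G i l ≤ runLen G l i k := by
  set L := l.length
  have hback : ∀ m < L, (k + (m + L - k) % L) % L = m := fun m hm => by
    rw [Nat.add_mod_mod, show k + (m + L - k) = m + L by omega, Nat.add_mod_right,
      Nat.mod_eq_of_lt hm]
  rw [cycUtil_eq_card]
  refine card_le_card_of_injOn (fun m => (m + L - k) % L) (fun m hm => ?_)
    (fun m₁ hm₁ m₂ hm₂ h => ?_)
  · simp only [coe_filter, mem_range, Set.mem_ofPred_eq] at hm ⊢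
    have hjL : (m + L - k) % L < L := Nat.mod_lt _ (by omega)
    refine ⟨hjL, country_eq_of_numSegs_le_one G i hseg hk hks hjL ?_⟩
    rw [cyc_congr (show k + (m + L - k) % L ≡ m [MOD L] by
      rw [Nat.ModEq, hback m hm.1, Nat.mod_eq_of_lt hm.1])]
    exact hm.2
  · simp only [coe_filter, mem_range, Set.mem_ofPred_eq] at hm₁ hm₂
    rw [← hback m₁ hm₁.1, ← hback m₂ hm₂.1]
    exact congrArg (fun x => (k + x) % L) h

end Segments

section GammaCycles

variable {n : ℕ} {G : PartGraph n} {i : Fin n} {Γ' Γ : Params n} {l : List ℕ}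

lemma ParamLE.iss_le (h : ParamLE i Γ' Γ) (j : Fin n) : Γ'.iss j ≤ Γ.iss j := by
  by_cases hj : j = i
  · exact hj ▸ h.2.2.1
  · exact (h.2.2.2.2.1 j hj).le

lemma ParamLE.isn_le (h : ParamLE i Γ' Γ) (j : Fin n) : Γ'.isn j ≤ Γ.isn j := by
  by_cases hj : j = i
  · exact hj ▸ h.2.2.2.1
  · exact (h.2.2.2.2.2 j hj).le

lemma IsGammaCycle.mono (hle : ParamLE i Γ' Γ) (h : IsGammaCycle G Γ' l) :
    IsGammaCycle G Γ l := by
  refine ⟨h.1, h.2.imp (fun ⟨j, hj, hlen⟩ => ⟨j, hj, hle.2.1 ▸ hlen⟩) ?_⟩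
  rintro ⟨hint, hlen, hiss, hisn⟩
  exact ⟨hint, hle.1 ▸ hlen, fun j k hk hs => (hiss j k hk hs).trans (hle.iss_le j),
    fun j => (hisn j).trans (hle.isn_le j)⟩

lemma IsCycle.length_pos (h : IsCycle G l) : 0 < l.length := by
  have := h.1; omega

lemma IsGammaCycle.intl_bounds (hg : IsGammaCycle G Γ l) (hint : IsInternational G l) :
    (l.length : ℕ∞) ≤ Γ.icl ∧
      (∀ i, ∀ k < l.length, segStart G l i k → (runLen G l i k : ℕ∞) ≤ Γ.iss i) ∧
      ∀ i, (numSegs G l i : ℕ∞) ≤ Γ.isn i :=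
  (hg.2.resolve_left fun ⟨j, hj, _⟩ => hint ⟨j, hj⟩).2

lemma cycUtil_le_iss (hg : IsGammaCycle G Γ l) (hint : IsInternational G l)
    (hseg : numSegs G l i ≤ 1) : (cycUtil G i l : ℕ∞) ≤ Γ.iss i := by
  rcases Nat.eq_zero_or_pos (cycUtil G i l) with h0 | h0
  · simp [h0]
  have hp : ∃ p < l.length, G.country (cyc l p) = i := by
    rw [cycUtil_eq_card] at h0
    obtain ⟨p, hp⟩ := card_pos.1 h0
    exact ⟨p, mem_range.1 (mem_filter.1 hp).1, (mem_filter.1 hp).2⟩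
  have hq : ∃ q < l.length, G.country (cyc l q) ≠ i := by
    have : ¬ IsNationalTo G l i := fun h => hint ⟨i, h⟩
    simp only [IsNationalTo, not_forall] at this
    obtain ⟨v, hv, hvi⟩ := this
    obtain ⟨q, hq, rfl⟩ := (mem_iff_exists_cyc (l := l)).1 hv
    exact ⟨q, hq, hvi⟩
  obtain ⟨k, hk, hks⟩ := exists_segStart G i hp hq
  calc (cycUtil G i l : ℕ∞) ≤ runLen G l i k := by
        exact_mod_cast cycUtil_le_runLen G i hseg hk hks
    _ ≤ Γ.iss i := (hg.intl_bounds hint).2.1 i k hk hks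

/-- `Γ'` can only reject such a cycle through a `V_i`-segment longer than `Γ'.iss i`. -/
lemma iss_lt_cycUtil (hle : ParamLE i Γ' Γ) (hg : IsGammaCycle G Γ l)
    (hint : IsInternational G l) (hseg : ∀ j, numSegs G l j ≤ 1)
    (hng : ¬ IsGammaCycle G Γ' l) : Γ'.iss i < (cycUtil G i l : ℕ∞) := by
  obtain ⟨hlen, hiss, -⟩ := hg.intl_bounds hint
  have hbad : ∃ j, ∃ k < l.length, segStart G l j k ∧ Γ'.iss j < runLen G l j k := by
    by_contra! hok
    refine hng ⟨hg.1, Or.inr ⟨hint, hle.1 ▸ hlen, hok, fun j => ?_⟩⟩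
    exact (Nat.cast_le.2 (hseg j)).trans (by simpa using Γ'.isn_pos j)
  obtain ⟨j, k, hk, hks, hgt⟩ := hbad
  obtain rfl : j = i := by
    by_contra hji
    exact (hle.2.2.2.2.1 j hji ▸ hiss j k hk hks).not_gt hgt
  exact hgt.trans_le (by exact_mod_cast runLen_le_cycUtil G j hg.1.length_pos k)

lemma cycUtil_le_of_subset {D C : List ℕ} (hD : D.Nodup) (hsub : D ⊆ C) :
    cycUtil G i D ≤ cycUtil G i C := by
  unfold cycUtil
  rw [← List.toFinset_card_of_nodup (hD.filter _)]
  refine (card_le_card fun v hv => ?_).trans (List.toFinset_card_le _)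
  simp only [List.mem_toFinset, List.mem_filter] at hv ⊢
  exact ⟨hsub hv.1, hv.2⟩

lemma cycUtil_le_of_subCond_of_not {C D D' : List ℕ} (hle : ParamLE i Γ' Γ)
    (hD : SubCond G Γ C D) (hD' : ¬ SubCond G Γ' C D) (hD'' : SubCond G Γ' C D') :
    cycUtil G i D' ≤ cycUtil G i D := by
  obtain ⟨hg, hint, hsub, hseg, hcan⟩ := hD
  have hng : ¬ IsGammaCycle G Γ' D := fun h => hD' ⟨h, hint, hsub, hseg, hcan⟩
  have h₁ : (cycUtil G i D' : ℕ∞) ≤ Γ'.iss i := cycUtil_le_iss hD''.1 hD''.2.1 (hD''.2.2.2.1 i)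
  exact_mod_cast (h₁.trans_lt (iss_lt_cycUtil hle hg hint hseg hng)).le

end GammaCycles

lemma Finset.expect_le_expect_of_subset {α : Type*} [DecidableEq α] {s t : Finset α} {g : α → ℝ}
    (hst : s ⊆ t) (hs : s.Nonempty) (h : ∀ a ∈ s, ∀ b ∈ t \ s, g a ≤ g b) :
    𝔼 a ∈ s, g a ≤ 𝔼 a ∈ t, g a := by
  obtain ⟨m, hm, hmax⟩ := s.exists_max_image g hs
  have hsum_s : ∑ a ∈ s, g a ≤ #s * g m := by
    simpa using s.sum_le_card_nsmul g (g m) hmax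
  have hsum_d : #(t \ s) * g m ≤ ∑ b ∈ t \ s, g b := by
    simpa using (t \ s).card_nsmul_le_sum g (g m) (h m hm)
  have hs₀ : (0 : ℝ) < #s := by exact_mod_cast hs.card_pos
  rw [expect_eq_sum_div_card, expect_eq_sum_div_card, div_le_div_iff₀ hs₀
    (by exact_mod_cast (hs.mono hst).card_pos), ← sum_sdiff hst,
    ← card_sdiff_add_card_eq_card hst]
  push_cast
  nlinarith [mul_le_mul_of_nonneg_right hsum_s (Nat.cast_nonneg (α := ℝ) #(t \ s)),
    mul_le_mul_of_nonneg_right hsum_d hs₀.le]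

section Packings

variable {n : ℕ} {G : PartGraph n}

lemma IsPacking.mono {P Q : Finset (List ℕ)} (hQ : IsPacking G Q)
    (hPQ : P ⊆ Q) : IsPacking G P :=
  ⟨fun l hl => hQ.1 l (hPQ hl), fun a ha b hb => hQ.2 a (hPQ ha) b (hPQ hb)⟩

lemma IsPacking.union {P Q : Finset (List ℕ)} (hP : IsPacking G P) (hQ : IsPacking G Q)
    (hPQ : ∀ a ∈ P, ∀ b ∈ Q, a.Disjoint b) : IsPacking G (P ∪ Q) := by
  refine ⟨fun l hl => (mem_union.1 hl).elim (hP.1 l) (hQ.1 l), fun a ha b hb hab => ?_⟩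
  rcases mem_union.1 ha with ha | ha <;> rcases mem_union.1 hb with hb | hb
  · exact hP.2 a ha b hb hab
  · exact hPQ a ha b hb
  · exact (hPQ b hb a ha).symm
  · exact hQ.2 a ha b hb hab

lemma IsGammaPackingG.insert {P : Finset (List ℕ)} {D : List ℕ} {Γ : Params n}
    (hP : IsGammaPackingG G Γ P)
    (hD : IsGammaCycle G Γ D) (hDP : ∀ a ∈ P, D.Disjoint a) :
    IsGammaPackingG G Γ (insert D P) := by
  rw [insert_eq]
  refine ⟨IsPacking.union ⟨by simpa using hD.1, by simp⟩ hP.1 (by simpa using hDP), ?_⟩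
  simpa using ⟨hD, hP.2⟩

lemma IsNatPacking.isGammaPackingG {Γ : Params n} {P : Finset (List ℕ)}
    (h : IsNatPacking G Γ.ncl P) : IsGammaPackingG G Γ P :=
  ⟨h.1, fun l hl => ⟨h.1.1 l hl, Or.inl (h.2 l hl)⟩⟩

lemma cycUtil_eq_length {i : Fin n} {l : List ℕ} (h : IsNationalTo G l i) :
    cycUtil G i l = l.length := by
  unfold cycUtil
  rw [List.filter_eq_self.2 fun v hv => by simpa using h v hv]

lemma IsNatPacking.filter_union {ncl : Fin n → ℕ∞} {i : Fin n}
    {Q P : Finset (List ℕ)} (hQ : IsNatPacking G ncl Q) (hP : IsPacking G P)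
    (hPi : ∀ l ∈ P, IsNationalTo G l i) (hPncl : ∀ l ∈ P, (l.length : ℕ∞) ≤ ncl i) :
    IsNatPacking G ncl (Q.filter (fun l => ¬ IsNationalTo G l i) ∪ P) := by
  refine ⟨hQ.1.mono (filter_subset _ _) |>.union hP fun a ha b hb v hva hvb => ?_, fun l hl => ?_⟩
  · obtain ⟨haQ, hai⟩ := mem_filter.1 ha
    obtain ⟨j, hj, -⟩ := hQ.2 a haQ
    obtain rfl : j = i := (hj v hva).symm.trans (hPi b hb v hvb)
    exact hai hj
  · rcases mem_union.1 hl with hl | hl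
    · exact hQ.2 l (mem_filter.1 hl).1
    · exact ⟨i, hPi l hl, hPncl l hl⟩

end Packings

section Step

variable {n : ℕ} {G : PartGraph n} {Γ : Params n} {i : Fin n}

noncomputable def substitutes (G : PartGraph n) (Γ : Params n) (C : List ℕ) :
    Finset (List ℕ) :=
  (SubCond_finite G Γ C).toFinset

@[simp]
lemma mem_substitutes {C D : List ℕ} : D ∈ substitutes G Γ C ↔ SubCond G Γ C D :=
  Set.Finite.mem_toFinset _

/-- Country `i`'s expected utility from Step 5's treatment of the selected cycle `C`; if `C`
is not turnable, the expectation over the empty set of substitutes is `0`, matching deletion. -/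
noncomputable def expCycUtil (G : PartGraph n) (Γ : Params n) (i : Fin n) (C : List ℕ) : ℝ :=
  if IsGammaCycle G Γ C then cycUtil G i C else 𝔼 D ∈ substitutes G Γ C, (cycUtil G i D : ℝ)

lemma expCycUtil_nonneg (C : List ℕ) : 0 ≤ expCycUtil G Γ i C := by
  unfold expCycUtil; split_ifs <;> positivity

lemma stepExp_cons (f : Finset (List ℕ) → ℝ) (C : List ℕ) (rest : List (List ℕ))
    (acc : Finset (List ℕ)) :
    stepExp G Γ f (C :: rest) acc =
      if IsGammaCycle G Γ C then stepExp G Γ f rest (insert C acc)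
      else if (substitutes G Γ C).Nonempty then
        𝔼 D ∈ substitutes G Γ C, stepExp G Γ f rest (insert D acc)
      else stepExp G Γ f rest acc := by
  have hsub : subList G Γ C = (substitutes G Γ C).toList := rfl
  simp only [stepExp, hsub, ne_eq, toList_eq_nil, ← not_nonempty_iff_eq_empty, not_not,
    sum_map_toList, length_toList, expect_eq_sum_div_card]

def PendingDisjoint (l : List (List ℕ)) (acc : Finset (List ℕ)) : Prop :=
  l.Pairwise List.Disjoint ∧ ∀ C ∈ l, ∀ a ∈ acc, C.Disjoint a

namespace PendingDisjoint

variable {C D : List ℕ} {rest : List (List ℕ)} {acc : Finset (List ℕ)}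

lemma tail (h : PendingDisjoint (C :: rest) acc) : PendingDisjoint rest acc :=
  ⟨(List.pairwise_cons.1 h.1).2, fun B hB => h.2 B (List.mem_cons_of_mem _ hB)⟩

lemma disjoint_of_subset (h : PendingDisjoint (C :: rest) acc) (hD : D ⊆ C) :
    ∀ a ∈ acc, D.Disjoint a :=
  fun a ha => List.disjoint_of_subset_left hD (h.2 C List.mem_cons_self a ha)

lemma not_mem_of_subset (h : PendingDisjoint (C :: rest) acc) (hD : D ⊆ C) (hne : D ≠ []) :
    D ∉ acc := fun hmem => by
  obtain ⟨v, hv⟩ := List.exists_mem_of_ne_nil D hne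
  exact h.disjoint_of_subset hD D hmem hv hv

lemma insert_of_subset (h : PendingDisjoint (C :: rest) acc) (hD : D ⊆ C) :
    PendingDisjoint rest (insert D acc) := by
  refine ⟨h.tail.1, fun B hB a ha => ?_⟩
  rcases mem_insert.1 ha with rfl | ha
  · exact List.disjoint_of_subset_right hD ((List.pairwise_cons.1 h.1).1 B hB).symm
  · exact h.tail.2 B hB a ha

end PendingDisjoint

lemma stepExp_eq_one {f : Finset (List ℕ) → ℝ} (hf : ∀ P, IsGammaPackingG G Γ P → f P = 1) :
    ∀ {l : List (List ℕ)} {acc : Finset (List ℕ)}, PendingDisjoint l acc →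
      IsGammaPackingG G Γ acc → stepExp G Γ f l acc = 1
  | [], acc, _, hacc => hf acc hacc
  | C :: rest, acc, h, hacc => by
    have key : ∀ D, IsGammaCycle G Γ D → D ⊆ C → stepExp G Γ f rest (insert D acc) = 1 :=
      fun D hD hDC => stepExp_eq_one hf (h.insert_of_subset hDC)
        (hacc.insert hD (h.disjoint_of_subset hDC))
    rw [stepExp_cons]
    split_ifs with hg hne
    · exact key C hg (List.Subset.refl C)
    · rw [expect_congr rfl fun D hD => key D (mem_substitutes.1 hD).1 (mem_substitutes.1 hD).2.2.1,
        expect_const hne]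
    · exact stepExp_eq_one hf h.tail hacc

lemma stepExp_packUtil :
    ∀ {l : List (List ℕ)} {acc : Finset (List ℕ)}, PendingDisjoint l acc →
      stepExp G Γ (fun P => (packUtil G i P : ℝ)) l acc =
        packUtil G i acc + (l.map (expCycUtil G Γ i)).sum
  | [], acc, _ => by simp [stepExp]
  | C :: rest, acc, h => by
    have key : ∀ D, IsCycle G D → D ⊆ C →
        stepExp G Γ (fun P => (packUtil G i P : ℝ)) rest (insert D acc) =
          (packUtil G i acc + (rest.map (expCycUtil G Γ i)).sum) + cycUtil G i D := by
      intro D hD hDC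
      rw [stepExp_packUtil (h.insert_of_subset hDC), packUtil, sum_insert
        (h.not_mem_of_subset hDC (List.ne_nil_of_length_pos hD.length_pos))]
      push_cast [packUtil]
      ring
    rw [stepExp_cons, List.map_cons, List.sum_cons, expCycUtil]
    split_ifs with hg hne
    · rw [key C hg.1 (List.Subset.refl C)]; ring
    · rw [expect_congr rfl fun D hD =>
        key D (mem_substitutes.1 hD).1.1 (mem_substitutes.1 hD).2.2.1,
        expect_add_distrib, expect_const hne]
      ring
    · rw [not_nonempty_iff_eq_empty.1 hne, expect_empty, stepExp_packUtil h.tail]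
      ring

lemma expCycUtil_mono {Γ' : Params n} (hle : ParamLE i Γ' Γ) (C : List ℕ) :
    expCycUtil G Γ' i C ≤ expCycUtil G Γ i C := by
  have hsubs : substitutes G Γ' C ⊆ substitutes G Γ C := fun D hD =>
    mem_substitutes.2 <| let h := mem_substitutes.1 hD; ⟨h.1.mono hle, h.2⟩
  unfold expCycUtil
  by_cases hg' : IsGammaCycle G Γ' C
  · rw [if_pos hg', if_pos (hg'.mono hle)]
  rw [if_neg hg']
  rcases (substitutes G Γ' C).eq_empty_or_nonempty with hemp | hne
  · rw [hemp, expect_empty]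
    exact expCycUtil_nonneg C
  split_ifs with hg
  · refine expect_le hne fun D hD => ?_
    have h := mem_substitutes.1 hD
    exact_mod_cast cycUtil_le_of_subset h.1.1.2.1 h.2.2.1
  · refine expect_le_expect_of_subset hsubs hne fun D hD D' hD' => ?_
    have h' := mem_sdiff.1 hD'
    exact_mod_cast cycUtil_le_of_subCond_of_not hle (mem_substitutes.1 h'.1)
      (fun h => h'.2 (mem_substitutes.2 h)) (mem_substitutes.1 hD)

end Step

lemma greedy_subset : ∀ (acc ord : List (List ℕ)), greedy acc ord ⊆ acc ++ ord
  | acc, [] => by simp [greedy]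
  | acc, c :: rest => by
    rw [greedy]
    split_ifs <;> refine List.Subset.trans (greedy_subset _ rest) fun C hC => ?_ <;>
      simp only [List.cons_append, List.mem_cons, List.mem_append] at hC ⊢ <;> tauto

lemma pairwise_disjoint_greedy : ∀ {acc : List (List ℕ)} (ord : List (List ℕ)),
    acc.Pairwise List.Disjoint → (greedy acc ord).Pairwise List.Disjoint
  | _, [], h => h
  | acc, c :: rest, h => by
    rw [greedy]
    split_ifs with hc
    · exact pairwise_disjoint_greedy rest (List.pairwise_cons.2 ⟨hc, h⟩)
    · exact pairwise_disjoint_greedy rest h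

lemma pendingDisjoint_greedy {n : ℕ} {G : PartGraph n} {icl : ℕ∞} {Cnat : Finset (List ℕ)}
    {ord : List (List ℕ)}
    (hord : ord ∈ (XList G icl (G.verts \ Cnat.biUnion List.toFinset)).permutations) :
    PendingDisjoint (greedy [] ord) Cnat := by
  refine ⟨pairwise_disjoint_greedy ord List.Pairwise.nil, fun C hC a ha v hvC hva => ?_⟩
  have hCX : C ∈ XList G icl (G.verts \ Cnat.biUnion List.toFinset) :=
    (List.mem_permutations.1 hord).subset (by simpa using greedy_subset [] ord hC)
  rw [XList, mem_toList, Set.Finite.mem_toFinset] at hCX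
  exact (mem_sdiff.1 (hCX.2.1 v hvC)).2 (mem_biUnion.2 ⟨a, ha, List.mem_toFinset.2 hva⟩)

lemma List.permutations_ne_nil {β : Type*} (L : List β) : L.permutations ≠ [] :=
  List.ne_nil_of_mem (List.mem_permutations.2 (List.Perm.refl L))

section ListAverage

variable {α : Type*} {L : List α} {g g' : α → ℝ} {c : ℝ}

lemma le_sum_map_div_length (hL : L ≠ []) (h : ∀ a ∈ L, c ≤ g a) :
    c ≤ (L.map g).sum / L.length := by
  rw [le_div_iff₀ (by exact_mod_cast List.length_pos_iff.2 hL)]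
  simpa [mul_comm] using (L.map g).card_nsmul_le_sum c (by simpa using h)

lemma sum_map_div_length_eq (hL : L ≠ []) (h : ∀ a ∈ L, g a = c) :
    (L.map g).sum / L.length = c := by
  rw [List.map_congr_left h, List.map_const', List.sum_replicate, nsmul_eq_mul,
    mul_div_cancel_left₀ _ (by exact_mod_cast List.length_pos_iff.2 hL |>.ne')]

lemma sum_map_div_length_mono (h : ∀ a ∈ L, g a ≤ g' a) :
    (L.map g).sum / L.length ≤ (L.map g').sum / L.length :=
  div_le_div_of_nonneg_right (List.sum_le_sum h) (Nat.cast_nonneg _)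

end ListAverage

section Morder

variable (I : IKEP) (Cnat : Finset (List ℕ))

lemma MorderExpFrom_eq_one (hCnat : IsGammaPackingG I.G I.prm Cnat) :
    MorderExpFrom I Cnat (fun P => if IsGammaPacking I P then 1 else 0) = 1 :=
  sum_map_div_length_eq (List.permutations_ne_nil _) fun _ hord =>
    stepExp_eq_one (fun _ hP => if_pos hP) (pendingDisjoint_greedy hord) hCnat

lemma packUtil_le_MorderExpFrom (i : Fin I.n) :
    (packUtil I.G i Cnat : ℝ) ≤ MorderExpFrom I Cnat fun P => (packUtil I.G i P : ℝ) := by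
  refine le_sum_map_div_length (List.permutations_ne_nil _) fun ord hord => ?_
  rw [stepExp_packUtil (pendingDisjoint_greedy hord)]
  exact le_add_of_nonneg_right (List.sum_nonneg fun x hx => by
    obtain ⟨C, -, rfl⟩ := List.mem_map.1 hx
    exact expCycUtil_nonneg C)

lemma MorderExpFrom_packUtil_mono {i : Fin I.n} {Γ' : Params I.n} (hle : ParamLE i Γ' I.prm) :
    (MorderExpFrom { I with prm := Γ' } Cnat fun P => (packUtil I.G i P : ℝ)) ≤
      MorderExpFrom I Cnat fun P => (packUtil I.G i P : ℝ) := by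
  simp only [MorderExpFrom, hle.1]
  refine sum_map_div_length_mono fun ord hord => ?_
  have h := pendingDisjoint_greedy hord
  rw [stepExp_packUtil h, stepExp_packUtil h]
  exact add_le_add le_rfl (List.sum_le_sum fun C _ => expCycUtil_mono hle C)

end Morder

lemma natSize_le_packUtil (I : IKEP) (i : Fin I.n) {Cnat : Finset (List ℕ)}
    (hmax : IsMaxNatPacking I.G I.prm.ncl Cnat) : natSize I i ≤ packUtil I.G i Cnat := by
  refine csSup_le ⟨0, ∅, ⟨by simp, by simp⟩, by simp, by simp, rfl⟩ ?_
  rintro _ ⟨P, hP, hPi, hPncl, rfl⟩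
  set A := Cnat.filter fun l => IsNationalTo I.G l i
  set B := Cnat.filter fun l => ¬ IsNationalTo I.G l i
  have hBP : Disjoint B P :=
    disjoint_left.2 fun l hlB hlP => (mem_filter.1 hlB).2 (hPi l hlP)
  have hexchange : packSize B + packSize P ≤ packSize A + packSize B := by
    have := hmax.2 _ (hmax.1.filter_union hP hPi hPncl)
    rwa [packSize, sum_union hBP, packSize, ← sum_filter_add_sum_filter_not Cnat
      (fun l => IsNationalTo I.G l i)] at this
  have hA : packSize A ≤ packUtil I.G i Cnat :=
    calc packSize A = ∑ l ∈ A, cycUtil I.G i l :=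
          sum_congr rfl fun l hl => (cycUtil_eq_length (mem_filter.1 hl).2).symm
      _ ≤ packUtil I.G i Cnat := sum_le_sum_of_subset (filter_subset _ _)
  omega

/-- For every pre-selection function `σ`, `ℳ_order` is a
mechanism — with probability `1` it returns a `Γ`-cycle packing of `G` — and
it is individually rational and incentive compatible (with respect to segment
size and segment number). -/
theorem Morder_is_mechanism_IR_and_IC (σ : PreSelection) :
    (∀ I : IKEP,
        MorderExp σ I (fun P => if IsGammaPacking I P then (1 : ℝ) else 0) = 1) ∧
      (∀ I : IKEP, ∀ i : Fin I.n, (natSize I i : ℝ) ≤ MorderU σ I i) ∧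
      (∀ I : IKEP, ∀ i : Fin I.n, ∀ Γ' : Params I.n, ParamLE i Γ' I.prm →
        MorderU σ { I with prm := Γ' } i ≤ MorderU σ I i) := by
  refine ⟨fun I => ?_, fun I i => ?_, fun I i Γ' hle => ?_⟩
  · exact MorderExpFrom_eq_one I _ (σ.isMax I.n I.G I.prm.ncl).1.isGammaPackingG
  · exact (Nat.cast_le.2 (natSize_le_packUtil I i (σ.isMax I.n I.G I.prm.ncl))).trans
      (packUtil_le_MorderExpFrom I _ i)
  · simp only [MorderU, MorderExp, hle.2.1]
    exact MorderExpFrom_packUtil_mono I _ hle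
end
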